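/- Let k > 0 and b_h ≥ 0 be real constants, and let e, w : ℝ → ℝ with e differentiable satisfying e'(t) = w(t) − k·e(t) and |w(t)| ≤ b_h for all t ≥ 0. Then limsup_{t → ∞} |e(t)| ≤ b_h/k. -/

import Mathlib

/-!
If `f' ≤ -k f` then `exp (k t) f t` is nonincreasing, so `f` decays at least like `exp (-k t)`.
Applied to `e - b_h / k` and to `-e - b_h / k`, this traps `e t` between `∓ b_h / k` up to a
term `exp (-k t) (|e 0| - b_h / k)` that vanishes as `t → ∞`.
-/

open Filter Real Set

section LinearDecay

variable {f f' : ℝ → ℝ} {k a : ℝ}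

theorem antitoneOn_exp_mul_of_hasDerivAt_le (hf : ∀ t, a ≤ t → HasDerivAt f (f' t) t)
    (hle : ∀ t, a ≤ t → f' t ≤ -(k * f t)) :
    AntitoneOn (fun t => exp (k * t) * f t) (Ici a) := by
  have hderiv : ∀ t, a ≤ t →
      HasDerivAt (fun s => exp (k * s) * f s) (exp (k * t) * (f' t + k * f t)) t := by
    intro t ht
    have hexp : HasDerivAt (fun s => exp (k * s)) (exp (k * t) * k) t := by
      simpa using ((hasDerivAt_id t).const_mul k).exp
    exact (hexp.mul (hf t ht)).congr_deriv (by ring)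
  refine antitoneOn_of_hasDerivWithinAt_nonpos (f' := fun t => exp (k * t) * (f' t + k * f t))
    (convex_Ici a) (fun t ht => (hderiv t ht).continuousAt.continuousWithinAt) ?_ ?_
  · rw [interior_Ici]
    exact fun t ht => (hderiv t (le_of_lt ht)).hasDerivWithinAt
  · rw [interior_Ici]
    intro t ht
    exact mul_nonpos_of_nonneg_of_nonpos (exp_pos _).le (by linarith [hle t (le_of_lt ht)])

theorem le_exp_mul_of_hasDerivAt_le (hf : ∀ t, a ≤ t → HasDerivAt f (f' t) t)
    (hle : ∀ t, a ≤ t → f' t ≤ -(k * f t)) {t : ℝ} (ht : a ≤ t) :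
    f t ≤ exp (-(k * (t - a))) * f a := by
  have hmono := antitoneOn_exp_mul_of_hasDerivAt_le hf hle self_mem_Ici ht ht
  have hsplit : exp (k * t) = exp (k * (t - a)) * exp (k * a) := by
    rw [← exp_add]; ring_nf
  rw [exp_neg, ← div_eq_inv_mul, le_div_iff₀' (exp_pos _)]
  refine le_of_mul_le_mul_left ?_ (exp_pos (k * a))
  simp only [hsplit] at hmono
  linarith

end LinearDecay

section BoundedForcing

variable {e w : ℝ → ℝ} {k b : ℝ}

theorem le_div_add_exp_mul_of_hasDerivAt (hk : k ≠ 0)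
    (hderiv : ∀ t, 0 ≤ t → HasDerivAt e (w t - k * e t) t) (hw : ∀ t, 0 ≤ t → w t ≤ b)
    {t : ℝ} (ht : 0 ≤ t) : e t ≤ b / k + exp (-(k * t)) * (e 0 - b / k) := by
  have hkb : k * (b / k) = b := mul_div_cancel₀ b hk
  have hdecay := le_exp_mul_of_hasDerivAt_le (f := fun s => e s - b / k) (k := k)
    (fun s hs => (hderiv s hs).sub_const (b / k))
    (fun s hs => by linarith [hw s hs, mul_sub k (e s) (b / k)]) ht
  simp only [sub_zero] at hdecay
  linarith

theorem abs_le_div_add_exp_mul_of_hasDerivAt (hk : k ≠ 0)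
    (hderiv : ∀ t, 0 ≤ t → HasDerivAt e (w t - k * e t) t) (hw : ∀ t, 0 ≤ t → |w t| ≤ b)
    {t : ℝ} (ht : 0 ≤ t) : |e t| ≤ b / k + exp (-(k * t)) * (|e 0| - b / k) := by
  have hupper := le_div_add_exp_mul_of_hasDerivAt hk hderiv
    (fun s hs => (abs_le.mp (hw s hs)).2) ht
  have hlower := le_div_add_exp_mul_of_hasDerivAt (e := -e) (w := -w) hk
    (fun s hs => ((hderiv s hs).neg).congr_deriv (by simp only [Pi.neg_apply]; ring))
    (fun s hs => neg_le.mp (abs_le.mp (hw s hs)).1) ht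
  simp only [Pi.neg_apply] at hlower
  have hexp := (exp_pos (-(k * t))).le
  rw [abs_le]
  constructor
  · linarith [mul_le_mul_of_nonneg_left (neg_le_abs (e 0)) hexp]
  · linarith [mul_le_mul_of_nonneg_left (le_abs_self (e 0)) hexp]

end BoundedForcing

theorem limsup_abs_le_of_le_add_exp_mul {u : ℝ → ℝ} {c C k : ℝ} (hk : 0 < k)
    (hu : ∀ t, 0 ≤ t → |u t| ≤ c + exp (-(k * t)) * C) :
    limsup (fun t => |u t|) atTop ≤ c := by
  have hbound : Tendsto (fun t => c + exp (-(k * t)) * C) atTop (nhds c) := by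
    have hdecay : Tendsto (fun t => exp (-(k * t))) atTop (nhds 0) :=
      tendsto_exp_atBot.comp (tendsto_neg_atTop_atBot.comp (tendsto_id.const_mul_atTop hk))
    simpa using (hdecay.mul_const C).const_add c
  calc limsup (fun t => |u t|) atTop
      ≤ limsup (fun t => c + exp (-(k * t)) * C) atTop :=
        limsup_le_limsup (eventually_atTop.mpr ⟨0, hu⟩)
          (isCoboundedUnder_le_of_le atTop fun t => abs_nonneg (u t)) hbound.isBoundedUnder_le
    _ = c := hbound.limsup_eq

theorem stmt_6_general (k b_h : ℝ) (hk : 0 < k)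
    (e w : ℝ → ℝ)
    (hderiv : ∀ t : ℝ, 0 ≤ t → HasDerivAt e (w t - k * e t) t)
    (hw : ∀ t : ℝ, 0 ≤ t → |w t| ≤ b_h) :
    Filter.limsup (fun t => |e t|) Filter.atTop ≤ b_h / k :=
  limsup_abs_le_of_le_add_exp_mul hk fun _ ht =>
    abs_le_div_add_exp_mul_of_hasDerivAt hk.ne' hderiv hw ht

/-- Convergence statement of Theorem 1: the observer estimation error `e`,
governed by `e' = w − k·e` with `|w| ≤ b_h`, is ultimately bounded by `b_h/k`. -/
theorem stmt_6 (k b_h : ℝ) (hk : 0 < k) (hbh : 0 ≤ b_h)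
    (e w : ℝ → ℝ)
    (hderiv : ∀ t : ℝ, 0 ≤ t → HasDerivAt e (w t - k * e t) t)
    (hw : ∀ t : ℝ, 0 ≤ t → |w t| ≤ b_h) :
    Filter.limsup (fun t => |e t|) Filter.atTop ≤ b_h / k :=
  stmt_6_general k b_h hk e w hderiv hw
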